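/- Let A=(Q,Σ,Δ,F) be a finite bottom-up tree automaton, let D be the maximal downward simulation on A, and let ∼• be the maximal simulation on the LTS A• included in I• = Q•×Q•. Then for all q,r∈Q, (q•,r•)∈∼• if and only if (q,r)∈D. -/
import Mathlib


/-- A simulation over an LTS with transition relations `δ a`. -/
def IsSimulation {S A : Type*} (δ : A → S → S → Prop) (ρ : S → S → Prop) : Prop :=
  ∀ u v, ρ u v → ∀ a u', δ a u u' → ∃ v', δ a v v' ∧ ρ u' v'

/-- A downward simulation on a (bottom-up) tree automaton with transition rules `Δ`. -/
def IsDownwardSim {Q A : Type*} (Δ : Set (List Q × A × Q)) (D : Q → Q → Prop) : Prop :=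
  ∀ q r, D q r → ∀ qs f, (qs, f, q) ∈ Δ →
    ∃ rs, (rs, f, r) ∈ Δ ∧ List.Forall₂ D qs rs

/-- The set `Lhs` of left-hand sides of transitions of a tree automaton. -/
def Lhs {Q A : Type*} (Δ : Set (List Q × A × Q)) : Type _ :=
  {l : List Q // ∃ f q, (l, f, q) ∈ Δ}

/-- The transition relation of the LTS `A•` associated with a tree automaton:
its states are `Q• = {q• | q ∈ Q} ∪ {l• | l ∈ Lhs}` (encoded as `Q ⊕ Lhs Δ`), its
labels are the symbols of the automaton together with the (0-based) positions
(encoded as `A ⊕ ℕ`), and for every rule `(q₁…qₙ, f, q) ∈ Δ` we have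
`(q•, (q₁…qₙ)•) ∈ δ•_f` and `((q₁…qₙ)•, qᵢ•) ∈ δ•_i` for every position `i`. -/
def deltaBullet {Q A : Type*} (Δ : Set (List Q × A × Q)) :
    (A ⊕ ℕ) → (Q ⊕ Lhs Δ) → (Q ⊕ Lhs Δ) → Prop
  | Sum.inl f, Sum.inl q, Sum.inr l => (l.1, f, q) ∈ Δ
  | Sum.inr i, Sum.inr l, Sum.inl p => ∃ h : i < l.1.length, l.1.get ⟨i, h⟩ = p
  | _, _, _ => False

/-- Correctness of the downward-simulation translation: for the maximal downward
simulation `D` on a finite tree automaton and the maximal simulation `∼•` on the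
LTS `A•` included in `I• = Q• × Q•` (the full relation), we have
`(q•, r•) ∈ ∼•` iff `(q, r) ∈ D` for all states `q, r` of the automaton. -/
theorem bullet_simulation_iff_downwardSim {Q A : Type*} [Finite Q] [Finite A]
    (rank : A → ℕ) (Δ : Set (List Q × A × Q)) (F : Set Q)
    (hrank : ∀ t ∈ Δ, rank t.2.1 = t.1.length)
    (D : Q → Q → Prop)
    (hDsim : IsDownwardSim Δ D)
    (hDmax : ∀ ρ : Q → Q → Prop, IsDownwardSim Δ ρ → ∀ q r, ρ q r → D q r)
    (sim : (Q ⊕ Lhs Δ) → (Q ⊕ Lhs Δ) → Prop)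
    (hsim : IsSimulation (deltaBullet Δ) sim)
    (hsimmax : ∀ ρ, IsSimulation (deltaBullet Δ) ρ → ∀ u v, ρ u v → sim u v) :
    ∀ q r : Q, sim (Sum.inl q) (Sum.inl r) ↔ D q r := by
  intro q r
  constructor
  · -- sim ⇒ D, via maximality of D
    intro hqr
    refine hDmax (fun q r => sim (Sum.inl q) (Sum.inl r)) ?_ q r hqr
    intro q r hsr qs f hmem
    obtain ⟨v', hv', hsv'⟩ := hsim _ _ hsr (Sum.inl f) (Sum.inr ⟨qs, f, q, hmem⟩) hmem
    cases v' with
    | inl _ => exact absurd hv' (by simp [deltaBullet])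
    | inr l' =>
      have hmem' : (l'.1, f, r) ∈ Δ := hv'
      refine ⟨l'.1, hmem', ?_⟩
      have hlen : qs.length = l'.1.length := by
        have h1 := hrank _ hmem
        have h2 := hrank _ hmem'
        simp at h1 h2; omega
      rw [List.forall₂_iff_get]
      refine ⟨hlen, fun i h₁ h₂ => ?_⟩
      obtain ⟨w, hw, hsw⟩ := hsim _ _ hsv' (Sum.inr i)
        (Sum.inl (qs.get ⟨i, h₁⟩)) ⟨h₁, rfl⟩
      cases w with
      | inr _ => exact absurd hw (by simp [deltaBullet])
      | inl p =>
        obtain ⟨h, hp⟩ := hw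
        have : p = l'.1.get ⟨i, h₂⟩ := by rw [← hp]
        rwa [this] at hsw
  · -- D ⇒ sim, via maximality of sim
    intro hqr
    set ρ : (Q ⊕ Lhs Δ) → (Q ⊕ Lhs Δ) → Prop := fun u v =>
      (∃ a b, u = Sum.inl a ∧ v = Sum.inl b ∧ D a b) ∨
      (∃ l l', u = Sum.inr l ∧ v = Sum.inr l' ∧ List.Forall₂ D l.1 l'.1) with hρ
    refine hsimmax ρ ?_ _ _ (Or.inl ⟨q, r, rfl, rfl, hqr⟩)
    rintro u v (⟨a, b, rfl, rfl, hab⟩ | ⟨l, l', rfl, rfl, hll⟩) c u' hu'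
    · cases c with
      | inr i => exact absurd hu' (by cases u' <;> simp [deltaBullet])
      | inl f =>
        cases u' with
        | inl _ => exact absurd hu' (by simp [deltaBullet])
        | inr l =>
          obtain ⟨rs, hrs, hf⟩ := hDsim _ _ hab l.1 f hu'
          exact ⟨Sum.inr ⟨rs, f, b, hrs⟩, hrs, Or.inr ⟨l, ⟨rs, f, b, hrs⟩, rfl, rfl, hf⟩⟩
    · cases c with
      | inl f => exact absurd hu' (by cases u' <;> simp [deltaBullet])
      | inr i =>
        cases u' with
        | inr _ => exact absurd hu' (by simp [deltaBullet])
        | inl p =>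
          obtain ⟨h, hp⟩ := hu'
          have hlen := hll.length_eq
          have h' : i < l'.1.length := hlen ▸ h
          refine ⟨Sum.inl (l'.1.get ⟨i, h'⟩), ⟨h', rfl⟩,
            Or.inl ⟨p, _, rfl, rfl, ?_⟩⟩
          have := List.forall₂_iff_get.mp hll
          exact hp ▸ this.2 i h h'
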